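/- arXiv:2101.01008 — 2 statements merged into one kernel-verified Lean document; each statement's English description precedes it below -/
import Mathlib

section
/- Let n ≥ 3 and let u : (0,∞) → ℂ be a compactly supported C¹ function. Then ∫₀^∞ |u(r)|² r^{n-3} dr ≤ (2/(n-2))² ∫₀^∞ |u'(r)|² r^{n-1} dr (the radial Hardy inequality with respect to the measure r^{n-1} dr). -/
open MeasureTheory

open scoped RealInnerProductSpace

set_option maxHeartbeats 1000000 in
/-- Radial Hardy inequality with respect to the measure `r^(n-1) dr`:
for `n ≥ 3` and `u` compactly supported and `C¹` in `(0,∞)`,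
`∫₀^∞ |u(r)|² r^(n-3) dr ≤ (2/(n-2))² ∫₀^∞ |u'(r)|² r^(n-1) dr`. -/
theorem radial_hardy_inequality (n : ℕ) (hn : 3 ≤ n)
    (u u' : ℝ → ℂ)
    (hderiv : ∀ r ∈ Set.Ioi (0:ℝ), HasDerivAt u (u' r) r)
    (hcont : ContinuousOn u' (Set.Ioi (0:ℝ)))
    (hsupp_cpt : IsCompact (tsupport u))
    (hsupp : tsupport u ⊆ Set.Ioi (0:ℝ)) :
    ∫ r in Set.Ioi (0:ℝ), ‖u r‖ ^ 2 * r ^ ((n:ℝ) - 3)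
      ≤ (2 / ((n:ℝ) - 2)) ^ 2 * ∫ r in Set.Ioi (0:ℝ), ‖u' r‖ ^ 2 * r ^ ((n:ℝ) - 1) := by
  have hn3 : (3:ℝ) ≤ (n:ℝ) := by exact_mod_cast hn
  set c : ℝ := (n:ℝ) with hc
  -- choose an interval [a,b] ⊆ (0,∞) containing the support in its interior
  obtain ⟨a, b, ha, hab, hK⟩ : ∃ a b : ℝ, 0 < a ∧ a < b ∧ tsupport u ⊆ Set.Ioo a b := by
    rcases (tsupport u).eq_empty_or_nonempty with h | h
    · exact ⟨1, 2, one_pos, one_lt_two, by simp [h]⟩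
    · have hm : sInf (tsupport u) ∈ tsupport u := hsupp_cpt.sInf_mem h
      have hM : sSup (tsupport u) ∈ tsupport u := hsupp_cpt.sSup_mem h
      have hm0 : 0 < sInf (tsupport u) := hsupp hm
      refine ⟨sInf (tsupport u) / 2, sSup (tsupport u) + 1, by linarith, ?_, ?_⟩
      · have : sInf (tsupport u) ≤ sSup (tsupport u) :=
          csInf_le_csSup h hsupp_cpt.bddBelow hsupp_cpt.bddAbove
        linarith
      · intro x hx
        have h1 : sInf (tsupport u) ≤ x := csInf_le hsupp_cpt.bddBelow hx
        have h2 : x ≤ sSup (tsupport u) := le_csSup hsupp_cpt.bddAbove hx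
        exact ⟨by linarith, by linarith⟩
  have hIccsub : Set.Icc a b ⊆ Set.Ioi 0 := fun x hx => lt_of_lt_of_le ha hx.1
  have hu_cont : ContinuousOn u (Set.Ioi 0) := fun r hr =>
    ((hderiv r hr).continuousAt).continuousWithinAt
  have hu'_zero : ∀ r : ℝ, 0 < r → r ∉ tsupport u → u' r = 0 := by
    intro r hr hrK
    have hev : u =ᶠ[nhds r] (fun _ => 0) := by
      filter_upwards [(isClosed_tsupport u).isOpen_compl.mem_nhds hrK] with x hx
      exact image_eq_zero_of_notMem_tsupport hx
    have h0 : HasDerivAt u 0 r :=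
      (hasDerivAt_const r (0:ℂ)).congr_of_eventuallyEq hev
    exact (hderiv r hr).unique h0
  -- reduction of the integrals over (0,∞) to interval integrals over [a,b]
  have hred : ∀ g : ℝ → ℝ, (∀ r ∈ Set.Ioi (0:ℝ) \ Set.Ioc a b, g r = 0) →
      ∫ r in Set.Ioi (0:ℝ), g r = ∫ r in a..b, g r := by
    intro g hg
    rw [intervalIntegral.integral_of_le hab.le]
    exact setIntegral_eq_of_subset_of_forall_diff_eq_zero measurableSet_Ioi
      (fun x hx => ha.trans hx.1) hg
  have hnsupp : ∀ r ∈ Set.Ioi (0:ℝ) \ Set.Ioc a b, r ∉ tsupport u := by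
    intro r hr hrK
    exact hr.2 (Set.Ioo_subset_Ioc_self (hK hrK))
  have hL : ∫ r in Set.Ioi (0:ℝ), ‖u r‖ ^ 2 * r ^ (c - 3)
      = ∫ r in a..b, ‖u r‖ ^ 2 * r ^ (c - 3) := by
    refine hred _ fun r hr => ?_
    rw [image_eq_zero_of_notMem_tsupport (hnsupp r hr)]
    simp
  have hR : ∫ r in Set.Ioi (0:ℝ), ‖u' r‖ ^ 2 * r ^ (c - 1)
      = ∫ r in a..b, ‖u' r‖ ^ 2 * r ^ (c - 1) := by
    refine hred _ fun r hr => ?_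
    rw [hu'_zero r hr.1 (hnsupp r hr)]
    simp
  rw [hL, hR]
  set A : ℝ := ∫ r in a..b, ‖u r‖ ^ 2 * r ^ (c - 3) with hA
  set B : ℝ := ∫ r in a..b, ‖u' r‖ ^ 2 * r ^ (c - 1) with hB
  -- continuity facts on [a,b]
  have hrpow : ∀ p : ℝ, ContinuousOn (fun r : ℝ => r ^ p) (Set.Icc a b) := by
    intro p r hr
    exact (Real.continuousAt_rpow_const r p (Or.inl (ne_of_gt (hIccsub hr)))).continuousWithinAt
  have huI : ContinuousOn u (Set.Icc a b) := hu_cont.mono hIccsub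
  have hu'I : ContinuousOn u' (Set.Icc a b) := hcont.mono hIccsub
  have hnormu : ContinuousOn (fun r => ‖u r‖ ^ 2) (Set.Icc a b) := (huI.norm.pow 2)
  have hnormu' : ContinuousOn (fun r => ‖u' r‖ ^ 2) (Set.Icc a b) := (hu'I.norm.pow 2)
  have hinner : ContinuousOn (fun r => 2 * ⟪u r, u' r⟫) (Set.Icc a b) :=
    (continuousOn_const.mul (huI.inner hu'I))
  have hIA : IntervalIntegrable (fun r => ‖u r‖ ^ 2 * r ^ (c - 3)) volume a b :=
    (hnormu.mul (hrpow (c-3))).intervalIntegrable_of_Icc hab.le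
  have hIB : IntervalIntegrable (fun r => ‖u' r‖ ^ 2 * r ^ (c - 1)) volume a b :=
    (hnormu'.mul (hrpow (c-1))).intervalIntegrable_of_Icc hab.le
  have hIG : IntervalIntegrable (fun r => 2 * ⟪u r, u' r⟫ * r ^ (c - 2)) volume a b :=
    ((hinner.mul (hrpow (c-2)))).intervalIntegrable_of_Icc hab.le
  -- integration by parts
  have hfderiv : ∀ r ∈ Set.uIcc a b,
      HasDerivAt (fun t => ‖u t‖ ^ 2 : ℝ → ℝ) (2 * ⟪u r, u' r⟫) r := by
    intro r hr
    rw [Set.uIcc_of_le hab.le] at hr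
    have hr0 : r ∈ Set.Ioi (0:ℝ) := hIccsub hr
    have h1 := (hderiv r hr0).inner ℝ (hderiv r hr0)
    have h2 : (fun t => ⟪u t, u t⟫) = fun t => ‖u t‖ ^ 2 := by
      funext t; rw [real_inner_self_eq_norm_sq]
    rw [h2] at h1
    refine h1.congr_deriv ?_
    rw [real_inner_comm (u' r) (u r)]; ring
  have hvderiv : ∀ r ∈ Set.uIcc a b,
      HasDerivAt (fun t : ℝ => t ^ (c - 2)) ((c - 2) * r ^ (c - 3)) r := by
    intro r hr
    rw [Set.uIcc_of_le hab.le] at hr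
    have := Real.hasDerivAt_rpow_const (x := r) (p := c - 2)
      (Or.inl (ne_of_gt (hIccsub hr)))
    convert this using 2
    ring
  have hIf' : IntervalIntegrable (fun r => 2 * ⟪u r, u' r⟫) volume a b :=
    hinner.intervalIntegrable_of_Icc hab.le
  have hIv' : IntervalIntegrable (fun r : ℝ => (c - 2) * r ^ (c - 3)) volume a b :=
    (continuousOn_const.mul (hrpow (c-3))).intervalIntegrable_of_Icc hab.le
  have hIBP := intervalIntegral.integral_deriv_mul_eq_sub hfderiv hvderiv hIf' hIv'
  have hua : u a = 0 := image_eq_zero_of_notMem_tsupport (fun h => lt_irrefl a (hK h).1)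
  have hub : u b = 0 := image_eq_zero_of_notMem_tsupport (fun h => lt_irrefl b (hK h).2)
  have hIfv' : IntervalIntegrable (fun r : ℝ => ‖u r‖ ^ 2 * ((c - 2) * r ^ (c - 3))) volume a b :=
    (hnormu.mul (continuousOn_const.mul (hrpow (c-3)))).intervalIntegrable_of_Icc hab.le
  rw [intervalIntegral.integral_add hIG hIfv'] at hIBP
  rw [hua, hub] at hIBP
  simp only [norm_zero, zero_pow, zero_mul, sub_zero, OfNat.ofNat_ne_zero, ne_eq, not_false_eq_true] at hIBP
  have hfv' : ∫ r in a..b, ‖u r‖ ^ 2 * ((c - 2) * r ^ (c - 3)) = (c - 2) * A := by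
    have he : (fun r : ℝ => ‖u r‖ ^ 2 * ((c - 2) * r ^ (c - 3)))
        = fun r : ℝ => (c - 2) * (‖u r‖ ^ 2 * r ^ (c - 3)) := by
      funext r; ring
    rw [he, intervalIntegral.integral_const_mul]
  rw [hfv'] at hIBP
  have hkey : (c - 2) * A = ∫ r in a..b, -(2 * ⟪u r, u' r⟫ * r ^ (c - 2)) := by
    rw [intervalIntegral.integral_neg]
    linarith [hIBP]
  have hd : (0:ℝ) < c - 2 := by linarith
  -- pointwise estimate
  have hpt : ∀ r ∈ Set.Icc a b, -(2 * ⟪u r, u' r⟫ * r ^ (c - 2))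
      ≤ (c - 2) / 2 * (‖u r‖ ^ 2 * r ^ (c - 3)) + 2 / (c - 2) * (‖u' r‖ ^ 2 * r ^ (c - 1)) := by
    intro r hr
    have hr0 : (0:ℝ) < r := hIccsub hr
    set x := ‖u r‖ with hx
    set y := ‖u' r‖ with hy
    set p := ⟪u r, u' r⟫ with hp
    set t := r ^ ((c - 3) / 2) with hht
    set w := r ^ ((c - 1) / 2) with hhw
    have ht0 : 0 ≤ t := Real.rpow_nonneg hr0.le _
    have hw0 : 0 ≤ w := Real.rpow_nonneg hr0.le _
    have htw : t * w = r ^ (c - 2) := by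
      rw [hht, hhw, ← Real.rpow_add hr0]
      congr 1
      ring
    have ht2 : t ^ 2 = r ^ (c - 3) := by
      rw [hht, ← Real.rpow_natCast (r ^ ((c - 3)/2)) 2, ← Real.rpow_mul hr0.le]
      congr 1
      push_cast; ring
    have hw2 : w ^ 2 = r ^ (c - 1) := by
      rw [hhw, ← Real.rpow_natCast (r ^ ((c - 1)/2)) 2, ← Real.rpow_mul hr0.le]
      congr 1
      push_cast; ring
    have hpb : -(x * y) ≤ p := by
      have := abs_real_inner_le_norm (u r) (u' r)
      rw [← hx, ← hy, ← hp] at this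
      linarith [neg_abs_le p, this]
    rw [← htw, ← ht2, ← hw2]
    rw [← mul_le_mul_iff_right₀ (show (0:ℝ) < 2 * (c - 2) by linarith)]
    have hrhs : 2 * (c - 2) * ((c - 2) / 2 * (x ^ 2 * t ^ 2) + 2 / (c - 2) * (y ^ 2 * w ^ 2))
        = (c - 2) ^ 2 * (x ^ 2 * t ^ 2) + 4 * (y ^ 2 * w ^ 2) := by
      field_simp
      ring
    rw [hrhs]
    nlinarith [sq_nonneg ((c - 2) * (x * t) - 2 * (y * w)),
      mul_nonneg (mul_nonneg (show (0:ℝ) ≤ 4 * (c - 2) by linarith) (mul_nonneg ht0 hw0))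
        (show (0:ℝ) ≤ p + x * y by linarith), sq_nonneg (x*t), sq_nonneg (y*w)]
  -- integrate the pointwise estimate
  have hRHSint : IntervalIntegrable
      (fun r : ℝ => (c - 2) / 2 * (‖u r‖ ^ 2 * r ^ (c - 3))
        + 2 / (c - 2) * (‖u' r‖ ^ 2 * r ^ (c - 1))) volume a b :=
    (hIA.const_mul _).add (hIB.const_mul _)
  have hLHSint : IntervalIntegrable
      (fun r : ℝ => -(2 * ⟪u r, u' r⟫ * r ^ (c - 2))) volume a b := hIG.neg
  have hmono := intervalIntegral.integral_mono_on hab.le hLHSint hRHSint hpt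
  rw [intervalIntegral.integral_add (hIA.const_mul _) (hIB.const_mul _),
    intervalIntegral.integral_const_mul, intervalIntegral.integral_const_mul] at hmono
  rw [← hkey, ← hA, ← hB] at hmono
  -- hmono : (c-2)*A ≤ (c-2)/2 * A + 2/(c-2) * B
  have key2 : (c - 2) / 2 * A ≤ 2 / (c - 2) * B := by linarith
  calc A = 2 / (c - 2) * ((c - 2) / 2 * A) := by field_simp
    _ ≤ 2 / (c - 2) * (2 / (c - 2) * B) :=
        mul_le_mul_of_nonneg_left key2 (by positivity)
    _ = (2 / (c - 2)) ^ 2 * B := by ring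
end

section
/- Let w ∈ ℝ and δ ∈ (0,1). Then for every k ∈ ℕ there is a constant C_k such that |(x d/dx)^k exp(-w x log x)| ≤ C_k x^{-kδ} for all x ∈ (0,1). -/
open MvPolynomial Real

noncomputable def Tw (w : ℝ) (p : MvPolynomial (Fin 2) ℝ) : MvPolynomial (Fin 2) ℝ :=
  X 0 * pderiv 0 p + (X 0 + X 1) * pderiv 1 p + C (-w) * (X 0 + X 1) * p

noncomputable def vv (x : ℝ) : Fin 2 → ℝ := ![x, x * Real.log x]

lemma hasDerivAt_eval_vv (p : MvPolynomial (Fin 2) ℝ) {x : ℝ} (hx : x ≠ 0) :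
    HasDerivAt (fun y => eval (vv y) p)
      (eval (vv x) (pderiv 0 p) + eval (vv x) (pderiv 1 p) * (Real.log x + 1)) x := by
  induction p using MvPolynomial.induction_on with
  | C a => simpa [vv] using hasDerivAt_const x a
  | add p q hp hq =>
      have := hp.add hq
      simp only [map_add, eval_add] at this ⊢
      refine this.congr_deriv ?_
      ring
  | mul_X p n hp =>
      have h2 : n = 0 ∨ n = 1 := by omega
      rcases h2 with rfl | rfl
      · have heq : ∀ y, eval (vv y) (p * X (0:Fin 2)) = eval (vv y) p * y := by
          intro y; simp [vv]
        simp only [heq]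
        refine (hp.mul (hasDerivAt_id x)).congr_deriv ?_
        simp only [pderiv_mul, pderiv_X_self, pderiv_X_of_ne (by decide : (0:Fin 2) ≠ 1),
          map_add, eval_mul, eval_add, eval_X, mul_one, mul_zero, eval_zero, add_zero, id]
        simp [vv]
        ring
      · have heq : ∀ y, eval (vv y) (p * X (1:Fin 2)) = eval (vv y) p * (y * Real.log y) := by
          intro y; simp [vv]
        simp only [heq]
        refine (hp.mul (Real.hasDerivAt_mul_log hx)).congr_deriv ?_
        simp only [pderiv_mul, pderiv_X_self, pderiv_X_of_ne (by decide : (1:Fin 2) ≠ 0),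
          map_add, eval_mul, eval_add, eval_X, mul_one, mul_zero, eval_zero, add_zero, id]
        simp [vv]
        ring

lemma iterate_eq (w : ℝ) : ∀ k : ℕ, ∀ x ∈ Set.Ioo (0:ℝ) 1,
    ((fun u : ℝ → ℝ => fun x => x * deriv u x)^[k]
        (fun x => Real.exp (-w * x * Real.log x))) x
      = eval (vv x) ((Tw w)^[k] 1) * Real.exp (-w * x * Real.log x) := by
  intro k
  induction k with
  | zero => intro x hx; simp
  | succ k ih =>
      intro x hx
      have hxne : x ≠ 0 := ne_of_gt hx.1
      rw [Function.iterate_succ_apply']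
      set q := (Tw w)^[k] 1 with hqdef
      have h1 : HasDerivAt (fun y : ℝ => -w * y * Real.log y) (-w * (Real.log x + 1)) x := by
        have := (Real.hasDerivAt_mul_log hxne).const_mul (-w)
        refine this.congr_of_eventuallyEq (Filter.Eventually.of_forall fun y => ?_)
        ring
      have hfd : HasDerivAt (fun y => Real.exp (-w * y * Real.log y))
          (Real.exp (-w * x * Real.log x) * (-w * (Real.log x + 1))) x := h1.exp
      have hq := hasDerivAt_eval_vv q hxne
      have hprod : HasDerivAt (fun y => eval (vv y) q * Real.exp (-w * y * Real.log y)) _ x :=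
        hq.mul hfd
      have hderiv : deriv ((fun u : ℝ → ℝ => fun x => x * deriv u x)^[k]
          (fun x => Real.exp (-w * x * Real.log x))) x
          = deriv (fun y => eval (vv y) q * Real.exp (-w * y * Real.log y)) x := by
        apply Filter.EventuallyEq.deriv_eq
        filter_upwards [isOpen_Ioo.mem_nhds hx] with y hy
        exact ih y hy
      show x * deriv _ x = _
      rw [hderiv, hprod.deriv, Function.iterate_succ_apply', ← hqdef]
      simp only [Tw, map_add, eval_add, eval_mul, eval_X, eval_C, map_mul]
      have hv0 : vv x 0 = x := rfl
      have hv1 : vv x 1 = x * Real.log x := rfl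
      rw [hv0, hv1]
      ring

lemma eval_bound (p : MvPolynomial (Fin 2) ℝ) {x : ℝ} (hx : x ∈ Set.Ioo (0:ℝ) 1) :
    |eval (vv x) p| ≤ ∑ m ∈ p.support, |coeff m p| := by
  rw [eval_eq]
  refine (Finset.abs_sum_le_sum_abs _ _).trans ?_
  apply Finset.sum_le_sum
  intro m hm
  rw [abs_mul]
  have h : |∏ i ∈ m.support, vv x i ^ m i| ≤ 1 := by
    rw [Finset.abs_prod]
    apply Finset.prod_le_one
    · intros; positivity
    · intro i hi
      clear hi
      rw [abs_pow]
      apply pow_le_one₀ (abs_nonneg _)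
      fin_cases i
      · show |vv x 0| ≤ 1
        rw [show vv x 0 = x from rfl, abs_of_pos hx.1]
        exact hx.2.le
      · show |vv x 1| ≤ 1
        rw [show vv x 1 = x * Real.log x from rfl, mul_comm]
        exact (Real.abs_log_mul_self_lt x hx.1 hx.2.le).le
  exact mul_le_of_le_one_right (abs_nonneg _) h

/-- For `w ∈ ℝ` and `δ ∈ (0,1)`, all iterated b-derivatives `(x d/dx)^k` of
`exp(-w x log x)` are bounded by `C_k x^{-kδ}` on `(0,1)`. -/
theorem exp_xlogx_symbol_estimates (w δ : ℝ) (hδ : δ ∈ Set.Ioo (0:ℝ) 1) :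
    ∀ k : ℕ, ∃ C : ℝ, ∀ x ∈ Set.Ioo (0:ℝ) 1,
      |((fun u : ℝ → ℝ => fun x => x * deriv u x)^[k]
          (fun x => Real.exp (-w * x * Real.log x))) x|
        ≤ C * x ^ (-(k:ℝ) * δ) := by
  intro k
  set q := (Tw w)^[k] 1 with hq
  refine ⟨(∑ m ∈ q.support, |coeff m q|) * Real.exp |w|, ?_⟩
  intro x hx
  have hC1 : (0:ℝ) ≤ ∑ m ∈ q.support, |coeff m q| :=
    Finset.sum_nonneg fun _ _ => abs_nonneg _
  have hb : |((fun u : ℝ → ℝ => fun x => x * deriv u x)^[k]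
      (fun x => Real.exp (-w * x * Real.log x))) x|
      ≤ (∑ m ∈ q.support, |coeff m q|) * Real.exp |w| := by
    rw [iterate_eq w k x hx, abs_mul]
    apply mul_le_mul (eval_bound q hx) ?_ (abs_nonneg _) hC1
    rw [abs_of_pos (Real.exp_pos _)]
    apply Real.exp_le_exp.2
    calc -w * x * Real.log x ≤ |(-w) * (x * Real.log x)| := by
          rw [← mul_assoc]; exact le_abs_self _
      _ = |w| * |x * Real.log x| := by rw [abs_mul, abs_neg]
      _ ≤ |w| * 1 := by
          apply mul_le_mul_of_nonneg_left _ (abs_nonneg _)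
          rw [mul_comm]
          exact (Real.abs_log_mul_self_lt x hx.1 hx.2.le).le
      _ = |w| := mul_one _
  refine hb.trans ?_
  have hr : (1:ℝ) ≤ x ^ (-(k:ℝ) * δ) := by
    apply Real.one_le_rpow_of_pos_of_le_one_of_nonpos hx.1 hx.2.le
    have : (0:ℝ) ≤ (k:ℝ) := Nat.cast_nonneg k
    nlinarith [hδ.1]
  nlinarith [mul_nonneg hC1 (Real.exp_pos |w|).le]
end
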